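/- arXiv:1608.06404 — 4 statements merged into one kernel-verified Lean document; each statement's English description precedes it below -/
import Mathlib

section
/- For every nonnegative integer i, e(2i)²·(a²+4) + 4 is a perfect square. -/
def e (a : ℕ) : ℕ → ℤ
  | 0 => 0
  | 1 => 1
  | (n+2) => a * e a (n+1) + e a n

lemma e_cassini (a : ℕ) : ∀ n : ℕ, (e a (n+1))^2 - a * e a (n+1) * e a n - (e a n)^2 = (-1)^n := by
  intro n
  induction n with
  | zero => simp [e]
  | succ m ih =>
    have h : e a (m+2) = a * e a (m+1) + e a m := rfl
    rw [h]
    have hp : ((-1:ℤ))^(m+1) = -(-1)^m := by ring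
    rw [hp]
    linear_combination -ih

theorem stmt6 (a : ℕ) (ha : 0 < a) (i : ℕ) :
    ∃ k : ℤ, (e a (2*i))^2 * (a^2 + 4) + 4 = k^2 := by
  refine ⟨2 * e a (2*i+1) - a * e a (2*i), ?_⟩
  have h := e_cassini a (2*i)
  have hpow : ((-1 : ℤ))^(2*i) = 1 := by
    rw [pow_mul]; norm_num
  rw [hpow] at h
  nlinarith [h]
end

section
/- For all nonnegative integers i and j, 2·e(2(i+j)+2) = e(2j+1)·√(e(2i+1)²·(a²+4)−4) + e(2i+1)·√(e(2j+1)²·(a²+4)−4). -/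
lemma e_nonneg (a : ℕ) : ∀ n, 0 ≤ e a n := by
  intro n
  induction n using Nat.twoStepInduction with
  | zero => simp [e]
  | one => simp [e]
  | more n ih1 ih2 => simp only [e]; positivity

/-- Cassini-type identity. -/
lemma cassini (a : ℕ) : ∀ n, e a (n+1)^2 - a * e a (n+1) * e a n - e a n ^2 = (-1)^n := by
  intro n
  induction n with
  | zero => simp [e]
  | succ n ih =>
    have h : e a (n+2) = a * e a (n+1) + e a n := rfl
    rw [h, pow_succ]
    ring_nf
    ring_nf at ih
    linarith

/-- Addition formula. -/
lemma add_formula (a m : ℕ) : ∀ n, 2 * e a (m+n)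
    = e a m * (2 * e a (n+1) - a * e a n) + e a n * (2 * e a (m+1) - a * e a m) := by
  intro n
  induction n using Nat.twoStepInduction with
  | zero => simp [e]; ring
  | one => simp [e]; ring
  | more n ih1 ih2 =>
    have h1 : e a (n+2) = a * e a (n+1) + e a n := rfl
    have h2 : e a (n+3) = a * e a (n+2) + e a (n+1) := rfl
    have h3 : e a (m+(n+2)) = a * e a (m+(n+1)) + e a (m+n) := by
      have : m + (n+2) = (m+n) + 2 := by ring
      rw [this]
      have : m + (n+1) = (m+n) + 1 := by ring
      rw [this]
      rfl
    rw [h3, h1, h2]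
    have := ih1
    have := ih2
    push_cast at *
    nlinarith [ih1, ih2]

lemma L_eq (a n : ℕ) : 2 * e a (n+2) - a * e a (n+1) = e a (n+2) + e a n := by
  have h : e a (n+2) = a * e a (n+1) + e a n := rfl
  linarith

lemma L_nonneg (a : ℕ) : ∀ n, 0 ≤ 2 * e a (n+1) - a * e a n := by
  intro n
  match n with
  | 0 => simp [e]
  | (k+1) =>
    rw [L_eq]
    have := e_nonneg a (k+2)
    have := e_nonneg a k
    linarith

lemma sqrt_key (a : ℕ) (n : ℕ) :
    Real.sqrt ((e a (2*n + 1) : ℝ)^2 * (a^2 + 4) - 4)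
      = ((2 * e a (2*n+2) - a * e a (2*n+1) : ℤ) : ℝ) := by
  have hc := cassini a (2*n+1)
  have hpow : ((-1 : ℤ))^(2*n+1) = -1 := by
    rw [pow_succ, pow_mul]; simp
  rw [hpow] at hc
  have key : (e a (2*n + 1) : ℤ)^2 * (a^2 + 4) - 4
      = (2 * e a (2*n+2) - a * e a (2*n+1))^2 := by
    have h : e a (2*n+2) = a * e a (2*n+1) + e a (2*n) := rfl
    nlinarith [hc, h]
  have hnn := L_nonneg a (2*n+1)
  have : ((e a (2*n + 1) : ℝ))^2 * ((a:ℝ)^2 + 4) - 4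
      = ((2 * e a (2*n+2) - a * e a (2*n+1) : ℤ) : ℝ)^2 := by
    push_cast
    have := congrArg (fun x : ℤ => (x : ℝ)) key
    push_cast at this
    linarith
  rw [this, Real.sqrt_sq (by exact_mod_cast hnn)]

theorem stmt8 (a : ℕ) (ha : 0 < a) (i j : ℕ) :
    2 * (e a (2*(i+j) + 2) : ℝ)
      = (e a (2*j + 1) : ℝ) * Real.sqrt ((e a (2*i + 1) : ℝ)^2 * (a^2 + 4) - 4)
        + (e a (2*i + 1) : ℝ) * Real.sqrt ((e a (2*j + 1) : ℝ)^2 * (a^2 + 4) - 4) := by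
  rw [sqrt_key a i, sqrt_key a j]
  have hadd := add_formula a (2*i+1) (2*j+1)
  have heq : 2*i+1 + (2*j+1) = 2*(i+j) + 2 := by ring
  rw [heq] at hadd
  have hi1 : 2*i+1+1 = 2*i+2 := rfl
  have hj1 : 2*j+1+1 = 2*j+2 := rfl
  rw [hi1, hj1] at hadd
  have := congrArg (fun x : ℤ => (x : ℝ)) hadd
  push_cast at this ⊢
  linarith
end

section
/- For all nonnegative integers i and j, 2·F(2(i+j)+2) = F(2j+1)·√(5·F(2i+1)²−4) + F(2i+1)·√(5·F(2j+1)²−4), where F is the Fibonacci sequence. -/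
lemma cassini_even (i : ℕ) :
    (Nat.fib (2*i) : ℤ) * Nat.fib (2*i+2) + 1 = (Nat.fib (2*i+1))^2 := by
  induction i with
  | zero => simp
  | succ n ih =>
    rw [show 2*(n+1) = 2*n + 2 from by ring]
    have e1 : (Nat.fib (2*n+2) : ℤ) = Nat.fib (2*n) + Nat.fib (2*n+1) := by
      rw [show 2*n+2 = (2*n)+2 from rfl, Nat.fib_add_two]; push_cast; ring
    have e2 : (Nat.fib (2*n+2+1) : ℤ) = Nat.fib (2*n+1) + Nat.fib (2*n+2) := by
      rw [show 2*n+2+1 = (2*n+1)+2 from rfl, Nat.fib_add_two]; push_cast; ring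
    have e3 : (Nat.fib (2*n+2+2) : ℤ) = Nat.fib (2*n+2) + Nat.fib (2*n+2+1) := by
      rw [show 2*n+2+2 = (2*n+2)+2 from rfl, Nat.fib_add_two]; push_cast; ring
    nlinarith [ih, e1, e2, e3]

lemma sqrt_lucas (i : ℕ) :
    Real.sqrt (5 * (Nat.fib (2*i + 1) : ℝ)^2 - 4)
      = (Nat.fib (2*i) : ℝ) + Nat.fib (2*i+2) := by
  have h : (5 : ℝ) * (Nat.fib (2*i + 1) : ℝ)^2 - 4
      = ((Nat.fib (2*i) : ℝ) + Nat.fib (2*i+2))^2 := by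
    have := cassini_even i
    have h2 : (Nat.fib (2*i+2) : ℤ) = Nat.fib (2*i) + Nat.fib (2*i+1) := by
      rw [show 2*i+2 = (2*i)+2 from rfl, Nat.fib_add_two]; push_cast; ring
    have : (5 : ℝ) * (Nat.fib (2*i + 1) : ℝ)^2 - 4
        = ((Nat.fib (2*i) : ℝ) + Nat.fib (2*i+2))^2 := by
      have hR : ((Nat.fib (2*i) : ℝ)) * Nat.fib (2*i+2) + 1 = (Nat.fib (2*i+1) : ℝ)^2 := by
        exact_mod_cast cassini_even i
      have hR2 : (Nat.fib (2*i+2) : ℝ) = Nat.fib (2*i) + Nat.fib (2*i+1) := by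
        exact_mod_cast h2
      nlinarith [hR, hR2]
    exact this
  rw [h, Real.sqrt_sq (by positivity)]

theorem stmt11 (i j : ℕ) :
    2 * (Nat.fib (2*(i+j) + 2) : ℝ)
      = (Nat.fib (2*j + 1) : ℝ) * Real.sqrt (5 * (Nat.fib (2*i + 1) : ℝ)^2 - 4)
        + (Nat.fib (2*i + 1) : ℝ) * Real.sqrt (5 * (Nat.fib (2*j + 1) : ℝ)^2 - 4) := by
  rw [sqrt_lucas i, sqrt_lucas j]
  have hA : Nat.fib (2*(i+j)+2) = Nat.fib (2*i+1) * Nat.fib (2*j) + Nat.fib (2*i+2) * Nat.fib (2*j+1) := by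
    have := Nat.fib_add (2*i+1) (2*j)
    rw [show 2*i+1 + (2*j) + 1 = 2*(i+j)+2 by ring] at this
    rw [this]
  have hB : Nat.fib (2*(i+j)+2) = Nat.fib (2*j+1) * Nat.fib (2*i) + Nat.fib (2*j+2) * Nat.fib (2*i+1) := by
    have := Nat.fib_add (2*j+1) (2*i)
    rw [show 2*j+1 + (2*i) + 1 = 2*(i+j)+2 by ring] at this
    rw [this]
  have hAR : (Nat.fib (2*(i+j)+2) : ℝ) = Nat.fib (2*i+1) * Nat.fib (2*j) + Nat.fib (2*i+2) * Nat.fib (2*j+1) := by exact_mod_cast congrArg (Nat.cast (R := ℝ)) hA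
  have hBR : (Nat.fib (2*(i+j)+2) : ℝ) = Nat.fib (2*j+1) * Nat.fib (2*i) + Nat.fib (2*j+2) * Nat.fib (2*i+1) := by exact_mod_cast congrArg (Nat.cast (R := ℝ)) hB
  linarith [hAR, hBR]
end

section
/- For all positive integers i and j, e(2i)·e(2j)·(a²+4) + p(i)·p(j) = 2·p(i+j), where p(k) = 2·e(2k−1) + a·e(2k) (so that p(k)² − e(2k)²·(a²+4) = 4). -/
def P (a : ℕ) (k : ℕ) : ℤ := 2 * e a (2*k - 1) + a * e a (2*k)

lemma e_rec (a : ℕ) (n : ℕ) : e a (n+2) = a * e a (n+1) + e a n := rfl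

lemma key (a l : ℕ) : ∀ k : ℕ,
    e a (l+1) * e a (k+1) * (a^2+4) + (2 * e a l + a * e a (l+1)) * (2 * e a k + a * e a (k+1))
      = 4 * e a (l+k+1) + 2 * a * e a (l+k+2) := by
  intro k
  induction k using Nat.twoStepInduction with
  | zero =>
    have h1 : l + 0 + 1 = l + 1 := by ring
    have h2 : l + 0 + 2 = l + 2 := by ring
    rw [h1, h2, e_rec]
    simp [e]; ring
  | one =>
    have h1 : l + 1 + 1 = l + 2 := by ring
    have h2 : l + 1 + 2 = (l+1) + 2 := by ring
    rw [h1, h2, e_rec, e_rec]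
    show e a (l+1) * e a 2 * _ + _ * (2 * e a 1 + a * e a 2) = _
    rw [show e a 2 = a * e a 1 + e a 0 from rfl]
    simp [e]; ring
  | more k ih1 ih2 =>
    have n3 : l + (k+2) + 1 = l + k + 3 := by omega
    have n4 : l + (k+2) + 2 = l + k + 4 := by omega
    have n2 : l + (k+1) + 1 = l + k + 2 := by omega
    have n2' : l + (k+1) + 2 = l + k + 3 := by omega
    rw [n3, n4]
    rw [n2, n2'] at ih2
    have r1 : e a (k+1+1) = a * e a (k+1) + e a k := e_rec a k
    have r2 : e a (k+2+1) = a * e a (k+1+1) + e a (k+1) := e_rec a (k+1)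
    have r3 : e a (l+k+3) = a * e a (l+k+2) + e a (l+k+1) := e_rec a (l+k+1)
    have r4 : e a (l+k+4) = a * e a (l+k+3) + e a (l+k+2) := e_rec a (l+k+2)
    rw [r2, r1] 
    rw [r1] at ih2
    rw [r3, r4]
    linear_combination a * ih2 + ih1

theorem stmt19 (a : ℕ) (ha : 0 < a) (i j : ℕ) (hi : 0 < i) (hj : 0 < j) :
    e a (2*i) * e a (2*j) * (a^2 + 4) + P a i * P a j = 2 * P a (i+j) := by
  obtain ⟨l, rfl⟩ : ∃ l, i = l + 1 := ⟨i - 1, by omega⟩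
  obtain ⟨k, rfl⟩ : ∃ k, j = k + 1 := ⟨j - 1, by omega⟩
  have h := key a (2*l+1) (2*k+1)
  unfold P
  have e1 : 2*(l+1) = (2*l+1)+1 := by ring
  have e2 : 2*(k+1) = (2*k+1)+1 := by ring
  have e3 : 2*(l+1) - 1 = 2*l+1 := by omega
  have e4 : 2*(k+1) - 1 = 2*k+1 := by omega
  have e5 : 2*(l+1+(k+1)) - 1 = (2*l+1)+(2*k+1)+1 := by omega
  have e6 : 2*(l+1+(k+1)) = (2*l+1)+(2*k+1)+2 := by ring
  rw [e3, e4, e5, e6, e1, e2]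
  linear_combination h
end
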